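/- Consider a monoatomic chain with an odd number N = 2m−1 (m ≥ 1) of mobile atoms and fixed ends whose force function F : ℝ → ℝ is Lipschitz: functions x_0, …, x_{N+1} : ℝ → ℝ with x_0 ≡ 0, x_{N+1} ≡ 0, each x_n twice differentiable, satisfying x_n''(t) = F(x_{n+1}(t) − x_n(t)) − F(x_n(t) − x_{n−1}(t)) for 1 ≤ n ≤ N and all t. If the initial data possess inversion structure (x_n(0) = −x_{N+1−n}(0) and x_n'(0) = −x_{N+1−n}'(0) for all 1 ≤ n ≤ N), then the central atom remains immobile for all time: x_m(t) = 0 for all t ∈ ℝ. -/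

import Mathlib

/-!
The reflection `n ↦ -x_{N+1-n}` maps solutions of the fixed-end chain to solutions, whatever the
force `F`. Written as a first-order system in the positions and velocities of the mobile atoms,
the equations of motion have a globally Lipschitz right-hand side, so a solution is determined by
its initial data. Inversion structure says that `x` and its reflection have the same initial
data, hence they coincide, and at the central atom this reads `x_m = -x_m`.
-/

theorem LipschitzWith.pi {α ι : Type*} {β : ι → Type*} [PseudoEMetricSpace α] [Fintype ι]
    [∀ i, PseudoEMetricSpace (β i)] {K : NNReal} {f : α → ∀ i, β i}
    (hf : ∀ i, LipschitzWith K (fun a => f a i)) : LipschitzWith K f :=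
  fun a b => edist_pi_le_iff.2 fun i => hf i a b

namespace MonoatomicChain

/-- Positions of all atoms `0, …, N+1`, given those of the mobile atoms `1, …, N`
(atom `n` is stored at index `n - 1`). -/
def withFixedEnds (N : ℕ) (u : Fin N → ℝ) (n : ℕ) : ℝ :=
  if h : 1 ≤ n ∧ n ≤ N then u ⟨n - 1, by omega⟩ else 0

/-- The force on the mobile atom `i + 1`. -/
def force (F : ℝ → ℝ) (N : ℕ) (u : Fin N → ℝ) (i : Fin N) : ℝ :=
  F (withFixedEnds N u (i + 2) - withFixedEnds N u (i + 1))
    - F (withFixedEnds N u (i + 1) - withFixedEnds N u i)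

def vectorField (F : ℝ → ℝ) (N : ℕ) (p : (Fin N → ℝ) × (Fin N → ℝ)) :
    (Fin N → ℝ) × (Fin N → ℝ) :=
  (p.2, force F N p.1)

lemma lipschitzWith_withFixedEnds (N n : ℕ) :
    LipschitzWith 1 (fun u : Fin N → ℝ => withFixedEnds N u n) := by
  unfold withFixedEnds
  split_ifs
  · exact LipschitzWith.eval _
  · exact LipschitzWith.const' 0

lemma lipschitzWith_force {F : ℝ → ℝ} {K : NNReal} (hF : LipschitzWith K F) (N : ℕ) :
    LipschitzWith (4 * K) (force F N) := by
  have bond (n : ℕ) : LipschitzWith (2 * K)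
      (fun u => F (withFixedEnds N u (n + 1) - withFixedEnds N u n)) := by
    rw [show 2 * K = K * (1 + 1) by ring]
    exact hF.comp ((lipschitzWith_withFixedEnds N (n + 1)).sub (lipschitzWith_withFixedEnds N n))
  rw [show 4 * K = 2 * K + 2 * K by ring]
  exact LipschitzWith.pi fun i => (bond (i + 1)).sub (bond i)

lemma lipschitzWith_vectorField {F : ℝ → ℝ} {K : NNReal} (hF : LipschitzWith K F) (N : ℕ) :
    LipschitzWith (max 1 (4 * K)) (vectorField F N) := by
  rw [← mul_one (4 * K)]
  exact LipschitzWith.prod_snd.prodMk ((lipschitzWith_force hF N).comp LipschitzWith.prod_fst)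

structure IsSolution (F : ℝ → ℝ) (N : ℕ) (x : ℕ → ℝ → ℝ) : Prop where
  left_fixed : x 0 = 0
  right_fixed : x (N + 1) = 0
  differentiable : ∀ n, 1 ≤ n → n ≤ N → Differentiable ℝ (x n)
  differentiable_deriv : ∀ n, 1 ≤ n → n ≤ N → Differentiable ℝ (deriv (x n))
  newton : ∀ n, 1 ≤ n → n ≤ N → ∀ t,
    deriv (deriv (x n)) t = F (x (n + 1) t - x n t) - F (x n t - x (n - 1) t)

noncomputable def phase (N : ℕ) (x : ℕ → ℝ → ℝ) (t : ℝ) : (Fin N → ℝ) × (Fin N → ℝ) :=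
  (fun i => x (i + 1) t, fun i => deriv (x (i + 1)) t)

variable {F : ℝ → ℝ} {N : ℕ} {x y : ℕ → ℝ → ℝ}

lemma IsSolution.withFixedEnds_phase (hx : IsSolution F N x) (t : ℝ) {n : ℕ} (hn : n ≤ N + 1) :
    withFixedEnds N (phase N x t).1 n = x n t := by
  unfold withFixedEnds phase
  split_ifs with h
  · show x (n - 1 + 1) t = x n t
    rw [Nat.sub_add_cancel h.1]
  · obtain rfl | rfl : n = 0 ∨ n = N + 1 := by omega
    · simp [hx.left_fixed]
    · simp [hx.right_fixed]

lemma IsSolution.hasDerivAt_phase (hx : IsSolution F N x) (t : ℝ) :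
    HasDerivAt (phase N x) (vectorField F N (phase N x t)) t := by
  refine .prodMk (hasDerivAt_pi.2 fun i => ?_) (hasDerivAt_pi.2 fun i => ?_)
  · exact (hx.differentiable _ (by omega) (by omega)).differentiableAt.hasDerivAt
  · refine (hx.differentiable_deriv _ (by omega) (by omega)).differentiableAt.hasDerivAt
      |>.congr_deriv ?_
    show _ = force F N (phase N x t).1 i
    rw [hx.newton _ (by omega) (by omega), force,
      hx.withFixedEnds_phase t (by omega), hx.withFixedEnds_phase t (by omega),
      hx.withFixedEnds_phase t (by omega), Nat.add_sub_cancel]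

theorem IsSolution.unique {K : NNReal} (hF : LipschitzWith K F) (hx : IsSolution F N x)
    (hy : IsSolution F N y) {t₀ : ℝ} (hpos : ∀ n, 1 ≤ n → n ≤ N → x n t₀ = y n t₀)
    (hvel : ∀ n, 1 ≤ n → n ≤ N → deriv (x n) t₀ = deriv (y n) t₀) :
    ∀ n, 1 ≤ n → n ≤ N → x n = y n := by
  have hphase : phase N x = phase N y :=
    ODE_solution_unique_univ (v := fun _ => vectorField F N) (s := fun _ => Set.univ)
      (fun _ => (lipschitzWith_vectorField hF N).lipschitzOnWith)
      (fun t => ⟨hx.hasDerivAt_phase t, trivial⟩) (fun t => ⟨hy.hasDerivAt_phase t, trivial⟩)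
      (Prod.ext (funext fun i => hpos _ (by omega) (by omega))
        (funext fun i => hvel _ (by omega) (by omega)))
  intro n hn hnN
  funext t
  have := congrArg (fun p => p.1 ⟨n - 1, by omega⟩) (congrFun hphase t)
  simpa [phase, Nat.sub_add_cancel hn] using this

theorem IsSolution.reflect (hx : IsSolution F N x) :
    IsSolution F N (fun n => -x (N + 1 - n)) where
  left_fixed := by simp [hx.right_fixed]
  right_fixed := by simp [hx.left_fixed]
  differentiable n h1 hN := (hx.differentiable _ (by omega) (by omega)).neg
  differentiable_deriv n h1 hN := by
    rw [deriv.neg']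
    exact (hx.differentiable_deriv _ (by omega) (by omega)).neg
  newton n h1 hN t := by
    have hright : N + 1 - (n + 1) = N + 1 - n - 1 := by omega
    have hleft : N + 1 - (n - 1) = N + 1 - n + 1 := by omega
    simp only [deriv.neg', deriv.fun_neg', Pi.neg_apply,
      hx.newton (N + 1 - n) (by omega) (by omega), hright, hleft, neg_sub_neg, neg_sub]

end MonoatomicChain

open MonoatomicChain in
/-- For a chain with an odd number `N = 2m−1` of mobile atoms, fixed ends and a
Lipschitz force function, initial data with inversion structure keep the central
atom `m` immobile for all time. -/
theorem central_atom_immobile_of_inversion_structure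
    (m : ℕ) (hm : 1 ≤ m) (N : ℕ) (hNm : N = 2 * m - 1)
    (F : ℝ → ℝ) (K : NNReal) (hF : LipschitzWith K F)
    (x : ℕ → ℝ → ℝ)
    (hx0 : x 0 = 0) (hxN1 : x (N + 1) = 0)
    (hdiff : ∀ n ≤ N + 1, Differentiable ℝ (x n))
    (hdiff2 : ∀ n ≤ N + 1, Differentiable ℝ (deriv (x n)))
    (hode : ∀ n, 1 ≤ n → n ≤ N → ∀ t : ℝ,
      deriv (deriv (x n)) t = F (x (n + 1) t - x n t) - F (x n t - x (n - 1) t))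
    (hinit : ∀ n, 1 ≤ n → n ≤ N → x n 0 = -x (N + 1 - n) 0)
    (hinit' : ∀ n, 1 ≤ n → n ≤ N → deriv (x n) 0 = -deriv (x (N + 1 - n)) 0) :
    ∀ t : ℝ, x m t = 0 := by
  have hx : IsSolution F N x :=
    ⟨hx0, hxN1, fun n _ hn => hdiff n (by omega), fun n _ hn => hdiff2 n (by omega), hode⟩
  have hsymm := hx.unique hF hx.reflect hinit (by simpa only [deriv.neg'] using hinit')
  intro t
  have hcentre : x m t = -x (N + 1 - m) t := congrFun (hsymm m hm (by omega)) t
  rw [show N + 1 - m = m by omega] at hcentre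
  linarith
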